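/- arXiv:1407.8238 — 6 statements merged into one kernel-verified Lean document; each statement's English description precedes it below -/
import Mathlib

section
/- Let α ∈ [0, 1/3) and let (α_k) be nondecreasing with 0 ≤ α_k ≤ α. Let (φ_k)_{k≥−1} be nonnegative reals with φ_{−1} = φ_0, and let (s_k)_{k≥0} be nonnegative reals with s_0 = 0. Define μ_k := φ_k − α_k φ_{k−1} + 2α_k s_k, and suppose φ_{k+1} − φ_k − α_k(φ_k − φ_{k−1}) ≤ −(1−α_k) s_{k+1} + 2α_k s_k for all k ≥ 0. Then (μ_k) is nonincreasing, (1−3α)·∑_{j=0}^∞ s_{j+1} ≤ 2φ_0, and φ_k ≤ α^k φ_0 + φ_0/(1−α) for all k. -/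
/-!
The sequence `μ_k = φ_k - α_k φ_{k-1} + 2 α_k s_k` is a Lyapunov function: the recursion together
with `α_k ≤ α_{k+1} ≤ α` gives `μ_{k+1} ≤ μ_k - (1 - 3α) s_{k+1}`. Telescoping bounds the partial
sums of `s` by `μ_0 - μ_n`. Since `φ_k - α φ_{k-1} ≤ μ_k ≤ μ_0 ≤ φ_0`, the sequence `φ` obeys
`φ_{k+1} ≤ α φ_k + φ_0`, hence stays below `φ_0 / (1 - α)`; this also bounds `-μ_n ≤ α φ_{n-1}` by `φ_0`.
-/

open Finset

theorem le_div_one_sub_of_le_mul_add {u : ℕ → ℝ} {a c : ℝ} (ha0 : 0 ≤ a) (ha1 : a < 1)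
    (h0 : u 0 ≤ c / (1 - a)) (hstep : ∀ k, u (k + 1) ≤ a * u k + c) (k : ℕ) :
    u k ≤ c / (1 - a) := by
  induction k with
  | zero => exact h0
  | succ k ih =>
    have hfix : a * (c / (1 - a)) + c = c / (1 - a) := by
      field_simp [(sub_pos.2 ha1).ne']
      ring
    calc u (k + 1) ≤ a * u k + c := hstep k
      _ ≤ a * (c / (1 - a)) + c := by gcongr
      _ = c / (1 - a) := hfix

theorem add_mul_sum_le_of_le_sub_mul {μ s : ℕ → ℝ} {c : ℝ}
    (h : ∀ k, μ (k + 1) ≤ μ k - c * s (k + 1)) (n : ℕ) :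
    μ n + c * ∑ j ∈ range n, s (j + 1) ≤ μ 0 := by
  have hsum : c * ∑ j ∈ range n, s (j + 1) ≤ ∑ j ∈ range n, (μ j - μ (j + 1)) := by
    rw [mul_sum]
    exact sum_le_sum fun j _ => by linarith [h j]
  rw [sum_range_sub'] at hsum
  linarith

/-- `φ (k - 1)` uses truncated subtraction, so `φ (0 - 1) = φ 0` encodes `φ_{-1} = φ_0`. -/
def inertialLyapunov (αk φ s : ℕ → ℝ) (k : ℕ) : ℝ :=
  φ k - αk k * φ (k - 1) + 2 * αk k * s k

section InertialLyapunov

variable {α : ℝ} {αk φ s : ℕ → ℝ}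

theorem inertialLyapunov_succ_le (hαkα : ∀ k, αk k ≤ α) (hαkmono : ∀ k, αk k ≤ αk (k + 1))
    (hφ : ∀ k, 0 ≤ φ k) (hs : ∀ k, 0 ≤ s k)
    (hrec : ∀ k, φ (k + 1) - φ k - αk k * (φ k - φ (k - 1)) ≤
        -(1 - αk k) * s (k + 1) + 2 * αk k * s k) (k : ℕ) :
    inertialLyapunov αk φ s (k + 1) ≤
      inertialLyapunov αk φ s k - (1 - 3 * α) * s (k + 1) := by
  have hφcoef : 0 ≤ (αk (k + 1) - αk k) * φ k := mul_nonneg (sub_nonneg.2 (hαkmono k)) (hφ k)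
  have hscoef : 0 ≤ (3 * α - αk k - 2 * αk (k + 1)) * s (k + 1) :=
    mul_nonneg (by linarith [hαkα k, hαkα (k + 1)]) (hs (k + 1))
  simp only [inertialLyapunov, Nat.add_sub_cancel]
  linarith [hrec k]

theorem inertialLyapunov_zero_le (hαk0 : ∀ k, 0 ≤ αk k) (hφ : ∀ k, 0 ≤ φ k) (hs0 : s 0 = 0) :
    inertialLyapunov αk φ s 0 ≤ φ 0 := by
  simp only [inertialLyapunov, Nat.zero_sub, hs0]
  nlinarith [mul_nonneg (hαk0 0) (hφ 0)]

theorem sub_mul_le_inertialLyapunov (hαk0 : ∀ k, 0 ≤ αk k) (hαkα : ∀ k, αk k ≤ α)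
    (hφ : ∀ k, 0 ≤ φ k) (hs : ∀ k, 0 ≤ s k) (k : ℕ) :
    φ k - α * φ (k - 1) ≤ inertialLyapunov αk φ s k := by
  have h₁ : αk k * φ (k - 1) ≤ α * φ (k - 1) := mul_le_mul_of_nonneg_right (hαkα k) (hφ _)
  have h₂ : 0 ≤ αk k * s k := mul_nonneg (hαk0 k) (hs k)
  unfold inertialLyapunov
  linarith

end InertialLyapunov

/-- Key estimates of the inertial PPA analysis. Here `φ (k-1)` (truncated subtraction)
encodes `φ_{k-1}` with the convention `φ_{-1} = φ_0`. -/
theorem stmt6 (α : ℝ) (hα0 : 0 ≤ α) (hα : α < 1 / 3)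
    (αk : ℕ → ℝ) (hαk0 : ∀ k, 0 ≤ αk k) (hαkα : ∀ k, αk k ≤ α)
    (hαkmono : ∀ k, αk k ≤ αk (k + 1))
    (φ : ℕ → ℝ) (hφ : ∀ k, 0 ≤ φ k)
    (s : ℕ → ℝ) (hs : ∀ k, 0 ≤ s k) (hs0 : s 0 = 0)
    (hrec : ∀ k, φ (k + 1) - φ k - αk k * (φ k - φ (k - 1)) ≤
        -(1 - αk k) * s (k + 1) + 2 * αk k * s k) :
    (∀ k, (φ (k + 1) - αk (k + 1) * φ k + 2 * αk (k + 1) * s (k + 1)) ≤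
        (φ k - αk k * φ (k - 1) + 2 * αk k * s k)) ∧
    (∀ n, (1 - 3 * α) * ∑ j ∈ Finset.range n, s (j + 1) ≤ 2 * φ 0) ∧
    (∀ k, φ k ≤ α ^ k * φ 0 + φ 0 / (1 - α)) := by
  set μ := inertialLyapunov αk φ s
  have hdesc := inertialLyapunov_succ_le hαkα hαkmono hφ hs hrec
  have hanti : Antitone μ := antitone_nat_of_succ_le fun k =>
    (hdesc k).trans (sub_le_self _ (mul_nonneg (by linarith) (hs (k + 1))))
  have hμ0 : μ 0 ≤ φ 0 := inertialLyapunov_zero_le hαk0 hφ hs0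
  have hlow := sub_mul_le_inertialLyapunov hαk0 hαkα hφ hs
  have hstep : ∀ k, φ (k + 1) ≤ α * φ k + φ 0 := fun k => by
    have h := hlow (k + 1)
    rw [Nat.add_sub_cancel] at h
    linarith [hanti (Nat.zero_le (k + 1))]
  have hα1 : 0 < 1 - α := by linarith
  have hbound : ∀ k, φ k ≤ φ 0 / (1 - α) :=
    le_div_one_sub_of_le_mul_add hα0 (by linarith) (le_div_self (hφ 0) hα1 (by linarith)) hstep
  have hαφ : ∀ k, α * φ k ≤ φ 0 := fun k => by
    calc α * φ k ≤ α * (φ 0 / (1 - α)) := mul_le_mul_of_nonneg_left (hbound k) hα0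
      _ ≤ φ 0 := by
        rw [mul_div_assoc', div_le_iff₀ hα1]
        nlinarith [hφ 0]
  refine ⟨fun k => (hanti (Nat.le_succ k) :), fun n => ?_, fun k => ?_⟩
  · linarith [add_mul_sum_le_of_le_sub_mul hdesc n, hlow n, hφ n, hαφ (n - 1)]
  · linarith [hbound k, mul_nonneg (pow_nonneg hα0 k) (hφ 0)]
end

section
/- Let H be a real Hilbert space (or ℝⁿ), F : H → H a mapping and H₀ a positive semidefinite self-adjoint operator such that ⟨u−v, F(u)−F(v)⟩ ≥ ‖u−v‖²_{H₀} for all u,v. Let G be positive semidefinite self-adjoint with G + H₀ positive definite, θ : H → ℝ closed proper convex, Ω ⊆ H closed convex, and λ > 0. Then for any z ∈ H there is at most one w ∈ Ω satisfying θ(u) − θ(w) + ⟨u − w, F(w) + λ^{-1}G(w − z)⟩ ≥ 0 for all u ∈ Ω. -/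
/-!
Testing each of the two variational inequalities at the other solution, the `θ`-terms cancel
and one gets `⟪w₁ - w₂, T w₁ - T w₂⟫ ≤ 0` for `T w = F w + λ⁻¹ • G (w - z)`. On the other hand
`⟪d, T (v + d) - T v⟫ ≥ ⟪d, (H₀ + λ⁻¹ • G) d⟫`, which is positive for `d ≠ 0` because
`H₀ + λ⁻¹ • G` dominates a positive multiple of `G + H₀ ≻ 0`.
-/

open scoped InnerProductSpace

section MixedVariationalInequality

variable {E : Type*} [NormedAddCommGroup E] [InnerProductSpace ℝ E]

def IsMixedVISolution (θ : E → ℝ) (T : E → E) (Ω : Set E) (w : E) : Prop :=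
  w ∈ Ω ∧ ∀ u ∈ Ω, θ u - θ w + ⟪u - w, T w⟫_ℝ ≥ 0

variable {θ : E → ℝ} {T : E → E} {Ω : Set E} {w₁ w₂ : E}

theorem IsMixedVISolution.inner_sub_map_sub_nonpos (h₁ : IsMixedVISolution θ T Ω w₁)
    (h₂ : IsMixedVISolution θ T Ω w₂) : ⟪w₁ - w₂, T w₁ - T w₂⟫_ℝ ≤ 0 := by
  have h₁₂ := h₁.2 w₂ h₂.1
  have h₂₁ := h₂.2 w₁ h₁.1
  rw [← neg_sub w₁ w₂, inner_neg_left] at h₁₂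
  rw [inner_sub_right]
  linarith

theorem IsMixedVISolution.eq_of_inner_sub_map_sub_pos
    (hT : ∀ u v, u ≠ v → 0 < ⟪u - v, T u - T v⟫_ℝ)
    (h₁ : IsMixedVISolution θ T Ω w₁) (h₂ : IsMixedVISolution θ T Ω w₂) : w₁ = w₂ := by
  by_contra hne
  exact (hT w₁ w₂ hne).not_ge (h₁.inner_sub_map_sub_nonpos h₂)

/-- `H₀ + c • G ≥ min 1 c • (G + H₀)` since both are positive semidefinite. -/
theorem inner_add_mul_inner_pos_of_posDef {H₀ G : E →L[ℝ] E}
    (hH₀psd : ∀ u, 0 ≤ ⟪u, H₀ u⟫_ℝ) (hGpsd : ∀ u, 0 ≤ ⟪u, G u⟫_ℝ)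
    (hpd : ∀ u, u ≠ 0 → 0 < ⟪u, (G + H₀) u⟫_ℝ) {c : ℝ} (hc : 0 < c) {d : E} (hd : d ≠ 0) :
    0 < ⟪d, H₀ d⟫_ℝ + c * ⟪d, G d⟫_ℝ := by
  have hsum := hpd d hd
  rw [add_apply, inner_add_right] at hsum
  rcases le_total c 1 with hc1 | hc1
  · nlinarith [hH₀psd d, hGpsd d]
  · nlinarith [hH₀psd d, hGpsd d]

theorem inner_sub_add_smul_map_sub_pos {F : E → E} {H₀ G : E →L[ℝ] E}
    (hmono : ∀ u v, ⟪u - v, F u - F v⟫_ℝ ≥ ⟪u - v, H₀ (u - v)⟫_ℝ)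
    (hH₀psd : ∀ u, 0 ≤ ⟪u, H₀ u⟫_ℝ) (hGpsd : ∀ u, 0 ≤ ⟪u, G u⟫_ℝ)
    (hpd : ∀ u, u ≠ 0 → 0 < ⟪u, (G + H₀) u⟫_ℝ) {c : ℝ} (hc : 0 < c) (z : E)
    {u v : E} (huv : u ≠ v) :
    0 < ⟪u - v, (F u + c • G (u - z)) - (F v + c • G (v - z))⟫_ℝ := by
  have hsplit : (F u + c • G (u - z)) - (F v + c • G (v - z)) = (F u - F v) + c • G (u - v) := by
    simp only [map_sub, smul_sub]
    abel
  rw [hsplit, inner_add_right, real_inner_smul_right]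
  linarith [hmono u v, inner_add_mul_inner_pos_of_posDef hH₀psd hGpsd hpd hc (sub_ne_zero.mpr huv)]

end MixedVariationalInequality

theorem stmt7_general {E : Type*} [NormedAddCommGroup E] [InnerProductSpace ℝ E]
    (F : E → E) (H₀ G : E →L[ℝ] E)
    (hH₀psd : ∀ u, 0 ≤ ⟪u, H₀ u⟫_ℝ) (hGpsd : ∀ u, 0 ≤ ⟪u, G u⟫_ℝ)
    (hmono : ∀ u v, ⟪u - v, F u - F v⟫_ℝ ≥ ⟪u - v, H₀ (u - v)⟫_ℝ)
    (hpd : ∀ u, u ≠ 0 → 0 < ⟪u, (G + H₀) u⟫_ℝ)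
    (θ : E → ℝ)
    (Ω : Set E)
    (lam : ℝ) (hlam : 0 < lam) (z : E) (w₁ w₂ : E)
    (hw₁ : w₁ ∈ Ω) (hw₂ : w₂ ∈ Ω)
    (h₁ : ∀ u ∈ Ω, θ u - θ w₁ + ⟪u - w₁, F w₁ + lam⁻¹ • G (w₁ - z)⟫_ℝ ≥ 0)
    (h₂ : ∀ u ∈ Ω, θ u - θ w₂ + ⟪u - w₂, F w₂ + lam⁻¹ • G (w₂ - z)⟫_ℝ ≥ 0) :
    w₁ = w₂ :=
  IsMixedVISolution.eq_of_inner_sub_map_sub_pos (θ := θ) (Ω := Ω)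
    (T := fun w => F w + lam⁻¹ • G (w - z))
    (fun _ _ => inner_sub_add_smul_map_sub_pos hmono hH₀psd hGpsd hpd (inv_pos.mpr hlam) z)
    ⟨hw₁, h₁⟩ ⟨hw₂, h₂⟩

/-- Uniqueness of the resolvent point in the general inertial proximal point step. -/
theorem stmt7 {E : Type*} [NormedAddCommGroup E] [InnerProductSpace ℝ E]
    (F : E → E) (H₀ G : E →L[ℝ] E)
    (hH₀sa : ∀ u v, ⟪H₀ u, v⟫_ℝ = ⟪u, H₀ v⟫_ℝ) (hGsa : ∀ u v, ⟪G u, v⟫_ℝ = ⟪u, G v⟫_ℝ)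
    (hH₀psd : ∀ u, 0 ≤ ⟪u, H₀ u⟫_ℝ) (hGpsd : ∀ u, 0 ≤ ⟪u, G u⟫_ℝ)
    (hmono : ∀ u v, ⟪u - v, F u - F v⟫_ℝ ≥ ⟪u - v, H₀ (u - v)⟫_ℝ)
    (hpd : ∀ u, u ≠ 0 → 0 < ⟪u, (G + H₀) u⟫_ℝ)
    (θ : E → ℝ) (hθ : ConvexOn ℝ Set.univ θ)
    (Ω : Set E) (hΩc : IsClosed Ω) (hΩconv : Convex ℝ Ω)
    (lam : ℝ) (hlam : 0 < lam) (z : E) (w₁ w₂ : E)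
    (hw₁ : w₁ ∈ Ω) (hw₂ : w₂ ∈ Ω)
    (h₁ : ∀ u ∈ Ω, θ u - θ w₁ + ⟪u - w₁, F w₁ + lam⁻¹ • G (w₁ - z)⟫_ℝ ≥ 0)
    (h₂ : ∀ u ∈ Ω, θ u - θ w₂ + ⟪u - w₂, F w₂ + lam⁻¹ • G (w₂ - z)⟫_ℝ ≥ 0) :
    w₁ = w₂ :=
  stmt7_general F H₀ G hH₀psd hGpsd hmono hpd θ Ω lam hlam z w₁ w₂ hw₁ hw₂ h₁ h₂
end

section
/- Let A ∈ ℝ^{m×n₁}, B ∈ ℝ^{m×n₂}, β > 0, and 0 < τ < 1/ρ(AᵀA), 0 < η < 1/ρ(BᵀB). Then the block matrix G = [[β(τ^{-1}I − AᵀA), 0, 0], [0, (β/η)I, −Bᵀ], [0, −B, β^{-1}I]] (of order n₁+n₂+m) is symmetric positive definite. -/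
/-!
`G` is block diagonal, so it suffices that both diagonal blocks are positive definite. The first is
`β (τ⁻¹ I - AᵀA)`, and `τ⁻¹ > ρ(AᵀA)` bounds its quadratic form below by `β (τ⁻¹ - ρ(AᵀA)) ‖x‖²`.
For the second, the Schur complement of its positive definite corner `β⁻¹ I` is
`(β/η) I - Bᵀ (β I) B = β (η⁻¹ I - BᵀB)`, positive definite for the same reason since `η⁻¹ > ρ(BᵀB)`.
-/

open scoped Matrix

namespace Matrix

variable {m n K : Type*} [Fintype m] [Fintype n] [DecidableEq n]
  [Field K] [PartialOrder K] [StarRing K] [IsOrderedAddMonoid K]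

theorem PosDef.fromBlocks_of_posDef_schur₂₂ {A : Matrix m m K}
    {B : Matrix m n K} {D : Matrix n n K} (hD : D.PosDef) (hS : (A - B * D⁻¹ * Bᴴ).PosDef) :
    (fromBlocks A B Bᴴ D).PosDef := by
  have : Invertible D := hD.isUnit.invertible
  refine .of_dotProduct_mulVec_pos ((IsHermitian.fromBlocks₂₂ A B hD.isHermitian).mpr
    hS.isHermitian) fun v hv => ?_
  obtain ⟨x, y, rfl⟩ : ∃ x y, v = Sum.elim x y := ⟨_, _, (Sum.elim_comp_inl_inr v).symm⟩
  rw [dotProduct_mulVec, schur_complement_eq₂₂ A B x y hD.isHermitian]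
  simp only [← dotProduct_mulVec]
  rcases eq_or_ne x 0 with rfl | hx
  · have hy : y ≠ 0 := by rintro rfl; exact hv Sum.elim_zero_zero
    simpa using hD.dotProduct_mulVec_pos hy
  · exact add_pos_of_nonneg_of_pos (hD.posSemidef.dotProduct_mulVec_nonneg _)
      (hS.dotProduct_mulVec_pos hx)

theorem PosDef.fromBlocks_zero {A : Matrix m m K} {D : Matrix n n K}
    (hA : A.PosDef) (hD : D.PosDef) : (fromBlocks A 0 0 D).PosDef := by
  simpa using PosDef.fromBlocks_of_posDef_schur₂₂ (B := 0) hD (by simpa using hA)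

theorem posDef_smul_one_sub_of_rayleigh_le {M : Matrix n n ℝ} (hM : M.IsHermitian) {ρ c : ℝ}
    (hρ : ∀ x, x ⬝ᵥ M *ᵥ x ≤ ρ * (x ⬝ᵥ x)) (hc : ρ < c) : (c • 1 - M).PosDef := by
  refine .of_dotProduct_mulVec_pos ((isHermitian_one.smul (.all c)).sub hM) fun x hx => ?_
  have hxx : 0 < x ⬝ᵥ x := by simpa using dotProduct_star_self_pos_iff.mpr hx
  rw [star_trivial, sub_mulVec, smul_mulVec, one_mulVec, dotProduct_sub, dotProduct_smul,
    smul_eq_mul]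
  nlinarith [hρ x]

end Matrix

/-- `ρA` and `ρB` stand for the spectral radii of `AᵀA` and `BᵀB`, which enter only through the
Rayleigh-quotient bounds `hρA` and `hρB`. -/
theorem stmt10 {m n₁ n₂ : ℕ} (A : Matrix (Fin m) (Fin n₁) ℝ) (B : Matrix (Fin m) (Fin n₂) ℝ)
    (β τ η ρA ρB : ℝ) (hβ : 0 < β) (hτ : 0 < τ) (hη : 0 < η)
    (hρA : ∀ x : Fin n₁ → ℝ, x ⬝ᵥ (Aᵀ * A).mulVec x ≤ ρA * (x ⬝ᵥ x))
    (hρB : ∀ y : Fin n₂ → ℝ, y ⬝ᵥ (Bᵀ * B).mulVec y ≤ ρB * (y ⬝ᵥ y))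
    (hτρ : τ * ρA < 1) (hηρ : η * ρB < 1) :
    (Matrix.fromBlocks
        (β • (τ⁻¹ • (1 : Matrix (Fin n₁) (Fin n₁) ℝ) - Aᵀ * A)) 0 0
        (Matrix.fromBlocks ((β / η) • (1 : Matrix (Fin n₂) (Fin n₂) ℝ)) (-Bᵀ)
          (-B) (β⁻¹ • (1 : Matrix (Fin m) (Fin m) ℝ)))).PosDef := by
  have hgram {k : ℕ} (C : Matrix (Fin m) (Fin k) ℝ) : (Cᵀ * C).IsHermitian := by
    simpa [Matrix.conjTranspose_eq_transpose_of_trivial] using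
      Matrix.isHermitian_conjTranspose_mul_self C
  have hinv {t ρ : ℝ} (ht : 0 < t) (h : t * ρ < 1) : ρ < t⁻¹ := by
    rwa [← one_div, lt_div_iff₀' ht]
  have hAblock : (β • (τ⁻¹ • (1 : Matrix (Fin n₁) (Fin n₁) ℝ) - Aᵀ * A)).PosDef :=
    (Matrix.posDef_smul_one_sub_of_rayleigh_le (hgram A) hρA (hinv hτ hτρ)).smul hβ
  have hD : (β⁻¹ • (1 : Matrix (Fin m) (Fin m) ℝ)).PosDef :=
    Matrix.PosDef.one.smul (inv_pos.2 hβ)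
  have hDinv : (β⁻¹ • (1 : Matrix (Fin m) (Fin m) ℝ))⁻¹ = β • 1 :=
    Matrix.inv_eq_left_inv <| by
      rw [smul_mul_smul_comm, one_mul, mul_inv_cancel₀ hβ.ne', one_smul]
  have hschur : (β / η) • (1 : Matrix (Fin n₂) (Fin n₂) ℝ)
      - (-Bᵀ) * (β⁻¹ • (1 : Matrix (Fin m) (Fin m) ℝ))⁻¹ * (-Bᵀ)ᴴ
      = β • (η⁻¹ • 1 - Bᵀ * B) := by
    rw [hDinv, Matrix.conjTranspose_eq_transpose_of_trivial, smul_sub, smul_smul, div_eq_mul_inv]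
    simp [Matrix.mul_smul, Matrix.smul_mul]
  have hBblock := Matrix.PosDef.fromBlocks_of_posDef_schur₂₂ hD (hschur ▸
    (Matrix.posDef_smul_one_sub_of_rayleigh_le (hgram B) hρB (hinv hη hηρ)).smul hβ)
  rw [Matrix.conjTranspose_neg, Matrix.conjTranspose_eq_transpose_of_trivial,
    Matrix.transpose_transpose] at hBblock
  exact hAblock.fromBlocks_zero hBblock
end

section
/- Let Ω ⊆ ℝⁿ be convex, θ : ℝⁿ → ℝ convex, F(w) = Lw + c with L skew-symmetric, G symmetric positive semidefinite, and w⁰, w¹, w², ..., a sequence in Ω satisfying θ(w) − θ(w^{i+1}) + ⟨w − w^{i+1}, F(w^{i+1}) + G(w^{i+1} − w^i)⟩ ≥ 0 for all w ∈ Ω and all i. Then for every k ≥ 0 and every w ∈ Ω, the ergodic average w̄^k := (1/(k+1))∑_{i=0}^k w^{i+1} satisfies θ(w) − θ(w̄^k) + ⟨w − w̄^k, F(w)⟩ ≥ −‖w − w⁰‖_G² / (2(k+1)). -/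
/-!
Since `L` is skew, `⟨u - v, F u - F v⟩ = 0`, so the iteration inequality at `u` can be read with
`F u` in place of `F (w (i+1))`; polarization of the `G`-form bounds the proximal term below by
`(‖u - w (i+1)‖²_G - ‖u - w i‖²_G) / 2`. Summing over `i ≤ k` telescopes to `-‖u - w 0‖²_G / 2`,
and the gap `v ↦ θ u - θ v + ⟨u - v, F u⟩` is concave, so by Jensen its value at the ergodic
average dominates the average of its values.
-/

open scoped Matrix

open Finset

namespace Matrix

variable {ι : Type*} [Fintype ι]

theorem dotProduct_mulVec_self_eq_zero_of_transpose_eq_neg {R : Type*} [CommRing R]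
    [IsAddTorsionFree R] {L : Matrix ι ι R} (hL : Lᵀ = -L) (x : ι → R) : x ⬝ᵥ L *ᵥ x = 0 := by
  refine self_eq_neg.mp ?_
  calc x ⬝ᵥ L *ᵥ x = Lᵀ *ᵥ x ⬝ᵥ x := by rw [dotProduct_mulVec, mulVec_transpose]
    _ = -(x ⬝ᵥ L *ᵥ x) := by rw [hL, neg_mulVec, neg_dotProduct, dotProduct_comm]

theorem PosSemidef.sub_le_two_mul_dotProduct_mulVec {G : Matrix ι ι ℝ} (hG : G.PosSemidef)
    (a b : ι → ℝ) :
    a ⬝ᵥ G *ᵥ a - (a - b) ⬝ᵥ G *ᵥ (a - b) ≤ 2 * (a ⬝ᵥ G *ᵥ b) := by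
  have hsymm : b ⬝ᵥ G *ᵥ a = a ⬝ᵥ G *ᵥ b := by
    rw [dotProduct_mulVec, ← mulVec_transpose, (isHermitian_iff_isSymm.mp hG.1).eq,
      dotProduct_comm]
  have hb : 0 ≤ b ⬝ᵥ G *ᵥ b := by simpa using hG.dotProduct_mulVec_nonneg b
  simp only [mulVec_sub, sub_dotProduct, dotProduct_sub]
  linarith

theorem dotProduct_proxStep_le {L G : Matrix ι ι ℝ} (hL : Lᵀ = -L) (hG : G.PosSemidef)
    (c u v v' : ι → ℝ) :
    (u - v) ⬝ᵥ (L *ᵥ v + c + G *ᵥ (v - v')) ≤ (u - v) ⬝ᵥ (L *ᵥ u + c) -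
      ((u - v) ⬝ᵥ G *ᵥ (u - v) - (u - v') ⬝ᵥ G *ᵥ (u - v')) / 2 := by
  have hskew : (u - v) ⬝ᵥ L *ᵥ (u - v) = 0 :=
    dotProduct_mulVec_self_eq_zero_of_transpose_eq_neg hL (u - v)
  have hG' := hG.sub_le_two_mul_dotProduct_mulVec (u - v) (v' - v)
  rw [show u - v - (v' - v) = u - v' by abel] at hG'
  rw [show L *ᵥ v = L *ᵥ u - L *ᵥ (u - v) by rw [mulVec_sub]; abel,
    show G *ᵥ (v - v') = -(G *ᵥ (v' - v)) by rw [← mulVec_neg, neg_sub]]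
  simp only [dotProduct_add, dotProduct_sub, dotProduct_neg]
  linarith

end Matrix

section ErgodicAverage

variable {ι : Type*} [Fintype ι]

theorem concaveOn_gap {θ : (ι → ℝ) → ℝ} (hθ : ConvexOn ℝ Set.univ θ) (u g : ι → ℝ) :
    ConcaveOn ℝ Set.univ fun v => θ u - θ v + (u - v) ⬝ᵥ g := by
  refine ((concaveOn_const (θ u) convex_univ).sub hθ).add
    ⟨convex_univ, fun x _ y _ a b _ _ hab => le_of_eq ?_⟩
  simp only [sub_dotProduct, add_dotProduct, smul_dotProduct, smul_eq_mul]
  linear_combination (u ⬝ᵥ g) * hab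

theorem average_gap_le_gap_average {θ : (ι → ℝ) → ℝ} (hθ : ConvexOn ℝ Set.univ θ)
    (u g : ι → ℝ) {κ : Type*} {s : Finset κ} (hs : s.Nonempty) (x : κ → ι → ℝ) :
    (#s : ℝ)⁻¹ * ∑ i ∈ s, (θ u - θ (x i) + (u - x i) ⬝ᵥ g) ≤
      θ u - θ ((#s : ℝ)⁻¹ • ∑ i ∈ s, x i) + (u - (#s : ℝ)⁻¹ • ∑ i ∈ s, x i) ⬝ᵥ g := by
  have hcard : (0 : ℝ) < #s := by exact_mod_cast hs.card_pos
  have hw : ∑ _i ∈ s, (#s : ℝ)⁻¹ = 1 := by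
    rw [sum_const, nsmul_eq_mul, mul_inv_cancel₀ hcard.ne']
  have := (concaveOn_gap hθ u g).le_map_sum (fun _ _ => by positivity) hw
    (fun i _ => Set.mem_univ (x i))
  rwa [← smul_sum, ← smul_sum, smul_eq_mul] at this

end ErgodicAverage

theorem stmt12_general {n : ℕ} (Ω : Set (Fin n → ℝ))
    (θ : (Fin n → ℝ) → ℝ) (hθconv : ConvexOn ℝ Set.univ θ)
    (L : Matrix (Fin n) (Fin n) ℝ) (hL : Lᵀ = -L) (c : Fin n → ℝ)
    (F : (Fin n → ℝ) → (Fin n → ℝ)) (hF : ∀ w, F w = L.mulVec w + c)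
    (G : Matrix (Fin n) (Fin n) ℝ) (hG : G.PosSemidef)
    (w : ℕ → (Fin n → ℝ))
    (hiter : ∀ i, ∀ u ∈ Ω, θ u - θ (w (i + 1)) +
      (u - w (i + 1)) ⬝ᵥ (F (w (i + 1)) + G.mulVec (w (i + 1) - w i)) ≥ 0) :
    ∀ k : ℕ, ∀ u ∈ Ω,
      θ u - θ (((k + 1 : ℝ))⁻¹ • ∑ i ∈ Finset.range (k + 1), w (i + 1)) +
        (u - ((k + 1 : ℝ))⁻¹ • ∑ i ∈ Finset.range (k + 1), w (i + 1)) ⬝ᵥ F u ≥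
          -((u - w 0) ⬝ᵥ G.mulVec (u - w 0)) / (2 * (k + 1)) := by
  intro k u hu
  obtain rfl : F = fun v => L *ᵥ v + c := funext hF
  set Q : ℕ → ℝ := fun i => (u - w i) ⬝ᵥ G *ᵥ (u - w i)
  have hstep (i : ℕ) : (Q (i + 1) - Q i) / 2 ≤
      θ u - θ (w (i + 1)) + (u - w (i + 1)) ⬝ᵥ (L *ᵥ u + c) := by
    linarith [hiter i u hu, Matrix.dotProduct_proxStep_le hL hG c u (w (i + 1)) (w i)]
  have hsum : -Q 0 / 2 ≤
      ∑ i ∈ range (k + 1), (θ u - θ (w (i + 1)) + (u - w (i + 1)) ⬝ᵥ (L *ᵥ u + c)) :=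
    calc -Q 0 / 2 ≤ (Q (k + 1) - Q 0) / 2 := by
          have : 0 ≤ Q (k + 1) := by
            simpa only [star_trivial] using hG.dotProduct_mulVec_nonneg (u - w (k + 1))
          linarith
      _ = ∑ i ∈ range (k + 1), (Q (i + 1) - Q i) / 2 := by rw [← sum_div, sum_range_sub]
      _ ≤ _ := sum_le_sum fun i _ => hstep i
  have havg := average_gap_le_gap_average hθconv u (L *ᵥ u + c) (nonempty_range_add_one (n := k))
    (fun i => w (i + 1))
  rw [card_range, Nat.cast_succ] at havg
  beta_reduce
  calc -Q 0 / (2 * (k + 1)) = (k + 1 : ℝ)⁻¹ * (-Q 0 / 2) := by field_simp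
    _ ≤ _ := mul_le_mul_of_nonneg_left hsum (by positivity)
    _ ≤ _ := havg

/-- Ergodic O(1/k) rate of the proximal point method for a mixed VI with skew-affine `F`. -/
theorem stmt12 {n : ℕ} (Ω : Set (Fin n → ℝ)) (hΩconv : Convex ℝ Ω)
    (θ : (Fin n → ℝ) → ℝ) (hθconv : ConvexOn ℝ Set.univ θ)
    (L : Matrix (Fin n) (Fin n) ℝ) (hL : Lᵀ = -L) (c : Fin n → ℝ)
    (F : (Fin n → ℝ) → (Fin n → ℝ)) (hF : ∀ w, F w = L.mulVec w + c)
    (G : Matrix (Fin n) (Fin n) ℝ) (hG : G.PosSemidef)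
    (w : ℕ → (Fin n → ℝ)) (hw0 : w 0 ∈ Ω) (hwΩ : ∀ i, w (i + 1) ∈ Ω)
    (hiter : ∀ i, ∀ u ∈ Ω, θ u - θ (w (i + 1)) +
      (u - w (i + 1)) ⬝ᵥ (F (w (i + 1)) + G.mulVec (w (i + 1) - w i)) ≥ 0) :
    ∀ k : ℕ, ∀ u ∈ Ω,
      θ u - θ (((k + 1 : ℝ))⁻¹ • ∑ i ∈ Finset.range (k + 1), w (i + 1)) +
        (u - ((k + 1 : ℝ))⁻¹ • ∑ i ∈ Finset.range (k + 1), w (i + 1)) ⬝ᵥ F u ≥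
          -((u - w 0) ⬝ᵥ G.mulVec (u - w 0)) / (2 * (k + 1)) :=
  stmt12_general Ω θ hθconv L hL c F hF G hG w hiter
end

section
/- Under the same proximal point iteration hypotheses (θ convex, F monotone, G symmetric positive semidefinite, w^{k} ∈ Ω with θ(w) − θ(w^{k+1}) + ⟨w − w^{k+1}, F(w^{k+1}) + G(w^{k+1} − w^k)⟩ ≥ 0 for all w ∈ Ω and all k), the sequence (‖w^{k+1} − w^k‖_G)_{k≥1} is nonincreasing: ‖w^{k+1} − w^k‖_G ≤ ‖w^k − w^{k−1}‖_G for all k ≥ 1. -/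
/-!
Write `x = w^{k+1} - w^k` and `y = w^k - w^{k-1}`. Testing the variational inequality for
`w^{k+1}` at `w^k` and the one for `w^k` at `w^{k+1}` and adding them, the `θ` terms cancel and
monotonicity of `F` disposes of the `F` terms, leaving `⟨x, G x⟩ ≤ ⟨x, G y⟩`. Cauchy–Schwarz for
the positive semidefinite form `G` bounds the right side by `‖x‖_G ‖y‖_G`, so `‖x‖_G ≤ ‖y‖_G`.
-/

open scoped Matrix

variable {ι : Type*} [Fintype ι]

lemma Matrix.PosSemidef.dotProduct_mulVec_comm {G : Matrix ι ι ℝ} (hG : G.PosSemidef)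
    (x y : ι → ℝ) : x ⬝ᵥ G *ᵥ y = y ⬝ᵥ G *ᵥ x := by
  rw [dotProduct_mulVec, ← mulVec_transpose, ← conjTranspose_eq_transpose_of_trivial,
    hG.isHermitian.eq, dotProduct_comm]

lemma Matrix.PosSemidef.dotProduct_mulVec_le_sqrt_mul_sqrt {G : Matrix ι ι ℝ}
    (hG : G.PosSemidef) (x y : ι → ℝ) :
    x ⬝ᵥ G *ᵥ y ≤ √(x ⬝ᵥ G *ᵥ x) * √(y ⬝ᵥ G *ᵥ y) := by
  have hnonneg (v : ι → ℝ) : 0 ≤ v ⬝ᵥ G *ᵥ v := by simpa using hG.dotProduct_mulVec_nonneg v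
  have hsq : (x ⬝ᵥ G *ᵥ y) ^ 2 ≤ (x ⬝ᵥ G *ᵥ x) * (y ⬝ᵥ G *ᵥ y) := by
    classical
    rw [sq]
    nth_rw 2 [hG.dotProduct_mulVec_comm x y]
    simpa only [toLinearMap₂'_apply'] using
      LinearMap.BilinForm.apply_mul_apply_le_of_forall_zero_le (toLinearMap₂' ℝ G)
        (by simpa only [toLinearMap₂'_apply'] using hnonneg) x y
  rw [← Real.sqrt_mul (hnonneg x)]
  exact (le_abs_self _).trans (Real.abs_le_sqrt hsq)

lemma Matrix.PosSemidef.sqrt_dotProduct_mulVec_le_of_le {G : Matrix ι ι ℝ} (hG : G.PosSemidef)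
    {x y : ι → ℝ} (h : x ⬝ᵥ G *ᵥ x ≤ x ⬝ᵥ G *ᵥ y) :
    √(x ⬝ᵥ G *ᵥ x) ≤ √(y ⬝ᵥ G *ᵥ y) := by
  have hx : √(x ⬝ᵥ G *ᵥ x) * √(x ⬝ᵥ G *ᵥ x) ≤ √(x ⬝ᵥ G *ᵥ x) * √(y ⬝ᵥ G *ᵥ y) := by
    rw [Real.mul_self_sqrt (by simpa using hG.dotProduct_mulVec_nonneg x)]
    exact h.trans (hG.dotProduct_mulVec_le_sqrt_mul_sqrt x y)
  nlinarith [Real.sqrt_nonneg (x ⬝ᵥ G *ᵥ x), Real.sqrt_nonneg (y ⬝ᵥ G *ᵥ y)]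

def IsProximalStep (Ω : Set (ι → ℝ)) (θ : (ι → ℝ) → ℝ) (F : (ι → ℝ) → ι → ℝ)
    (G : Matrix ι ι ℝ) (a b : ι → ℝ) : Prop :=
  ∀ u ∈ Ω, θ u - θ b + (u - b) ⬝ᵥ (F b + G *ᵥ (b - a)) ≥ 0

lemma IsProximalStep.dotProduct_mulVec_le {Ω : Set (ι → ℝ)} {θ : (ι → ℝ) → ℝ}
    {F : (ι → ℝ) → ι → ℝ} {G : Matrix ι ι ℝ} {a b c : ι → ℝ}
    (hab : IsProximalStep Ω θ F G a b) (hbc : IsProximalStep Ω θ F G b c)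
    (hb : b ∈ Ω) (hc : c ∈ Ω) (hF : 0 ≤ (c - b) ⬝ᵥ (F c - F b)) :
    (c - b) ⬝ᵥ G *ᵥ (c - b) ≤ (c - b) ⬝ᵥ G *ᵥ (b - a) := by
  have hbc' := hbc b hb
  have hab' := hab c hc
  rw [← neg_sub c b, neg_dotProduct] at hbc'
  simp only [dotProduct_add, dotProduct_sub] at hbc' hab' hF
  linarith

theorem stmt13_general {n : ℕ} (Ω : Set (Fin n → ℝ))
    (θ : (Fin n → ℝ) → ℝ)
    (F : (Fin n → ℝ) → (Fin n → ℝ)) (hFmono : ∀ u v, 0 ≤ (u - v) ⬝ᵥ (F u - F v))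
    (G : Matrix (Fin n) (Fin n) ℝ) (hG : G.PosSemidef)
    (w : ℕ → (Fin n → ℝ)) (hwΩ : ∀ k, w k ∈ Ω)
    (hiter : ∀ k, ∀ u ∈ Ω, θ u - θ (w (k + 1)) +
      (u - w (k + 1)) ⬝ᵥ (F (w (k + 1)) + G.mulVec (w (k + 1) - w k)) ≥ 0) :
    ∀ k, 1 ≤ k →
      Real.sqrt ((w (k + 1) - w k) ⬝ᵥ G.mulVec (w (k + 1) - w k)) ≤
        Real.sqrt ((w k - w (k - 1)) ⬝ᵥ G.mulVec (w k - w (k - 1))) := by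
  intro k hk
  obtain ⟨m, rfl⟩ := Nat.exists_eq_add_one.mpr hk
  rw [Nat.add_sub_cancel]
  exact hG.sqrt_dotProduct_mulVec_le_of_le <|
    IsProximalStep.dotProduct_mulVec_le (hiter m) (hiter (m + 1)) (hwΩ _) (hwΩ _) (hFmono _ _)

/-- The G-seminorm of the difference of consecutive proximal point iterates is nonincreasing. -/
theorem stmt13 {n : ℕ} (Ω : Set (Fin n → ℝ)) (hΩconv : Convex ℝ Ω)
    (θ : (Fin n → ℝ) → ℝ) (hθconv : ConvexOn ℝ Set.univ θ)
    (F : (Fin n → ℝ) → (Fin n → ℝ)) (hFmono : ∀ u v, 0 ≤ (u - v) ⬝ᵥ (F u - F v))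
    (G : Matrix (Fin n) (Fin n) ℝ) (hG : G.PosSemidef)
    (w : ℕ → (Fin n → ℝ)) (hwΩ : ∀ k, w k ∈ Ω)
    (hiter : ∀ k, ∀ u ∈ Ω, θ u - θ (w (k + 1)) +
      (u - w (k + 1)) ⬝ᵥ (F (w (k + 1)) + G.mulVec (w (k + 1) - w k)) ≥ 0) :
    ∀ k, 1 ≤ k →
      Real.sqrt ((w (k + 1) - w k) ⬝ᵥ G.mulVec (w (k + 1) - w k)) ≤
        Real.sqrt ((w k - w (k - 1)) ⬝ᵥ G.mulVec (w k - w (k - 1))) :=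
  stmt13_general Ω θ F hFmono G hG w hwΩ hiter
end

section
/- Under the proximal point iteration hypotheses above, if w* ∈ Ω satisfies θ(w) − θ(w*) + ⟨w − w*, F(w*)⟩ ≥ 0 for all w ∈ Ω (F monotone), then for each k: ‖w^{k+1} − w*‖_G² ≤ ‖w^k − w*‖_G² − ‖w^k − w^{k+1}‖_G². Consequently ∑_{k=0}^∞ ‖w^{k+1} − w^k‖_G² ≤ ‖w^0 − w*‖_G² and ‖w^k − w^{k−1}‖_G² ≤ ‖w^0 − w*‖_G²/k for all k ≥ 1 (using that ‖w^{k+1} − w^k‖_G is nonincreasing). -/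
open scoped Matrix

/-!
Testing the variational inequality of one point at another and adding the two cancels θ, and
monotonicity of `F` then leaves `0 ≤ ⟨x - y, h - g⟩` for the perturbations `g`, `h`. For an
iterate against `w*` this is `⟨w^{k+1} - w*, G (w^k - w^{k+1})⟩ ≥ 0`, and expanding
`‖w^k - w*‖_G² = ‖(w^{k+1} - w*) + (w^k - w^{k+1})‖_G²` gives the Fejér inequality. For two
consecutive iterates it gives `⟨q, G (p - q)⟩ ≥ 0` with `p, q` consecutive differences, whence
`‖q‖_G ≤ ‖p‖_G`. Telescoping bounds the sum of the `‖w^{k+1} - w^k‖_G²`, and since they decrease,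
`k ‖w^k - w^{k-1}‖_G²` is at most that sum.
-/

namespace Matrix

variable {ι R : Type*} [Fintype ι]

theorem IsSymm.dotProduct_mulVec_comm [CommSemiring R] {G : Matrix ι ι R} (hG : G.IsSymm)
    (x y : ι → R) : x ⬝ᵥ G *ᵥ y = y ⬝ᵥ G *ᵥ x := by
  rw [dotProduct_mulVec, ← mulVec_transpose, hG.eq, dotProduct_comm]

theorem IsSymm.add_dotProduct_mulVec_add [CommRing R] {G : Matrix ι ι R} (hG : G.IsSymm)
    (a d : ι → R) :
    (a + d) ⬝ᵥ G *ᵥ (a + d) = a ⬝ᵥ G *ᵥ a + 2 * (a ⬝ᵥ G *ᵥ d) + d ⬝ᵥ G *ᵥ d := by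
  simp only [mulVec_add, add_dotProduct, dotProduct_add, hG.dotProduct_mulVec_comm d a]
  ring

theorem sub_dotProduct_mulVec_sub_comm [CommRing R] (G : Matrix ι ι R) (x y : ι → R) :
    (x - y) ⬝ᵥ G *ᵥ (x - y) = (y - x) ⬝ᵥ G *ᵥ (y - x) := by
  rw [← neg_sub y x, mulVec_neg, neg_dotProduct, dotProduct_neg, neg_neg]

theorem PosSemidef.dotProduct_mulVec_self_nonneg {G : Matrix ι ι ℝ} (hG : G.PosSemidef)
    (x : ι → ℝ) : 0 ≤ x ⬝ᵥ G *ᵥ x := by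
  simpa using hG.dotProduct_mulVec_nonneg x

theorem PosSemidef.add_dotProduct_mulVec_add_ge {G : Matrix ι ι ℝ} (hG : G.PosSemidef)
    {a d : ι → ℝ} (had : 0 ≤ a ⬝ᵥ G *ᵥ d) :
    a ⬝ᵥ G *ᵥ a + d ⬝ᵥ G *ᵥ d ≤ (a + d) ⬝ᵥ G *ᵥ (a + d) := by
  rw [(isHermitian_iff_isSymm.mp hG.isHermitian).add_dotProduct_mulVec_add]
  linarith

end Matrix

theorem sub_dotProduct_sub_nonneg_of_variational {ι : Type*} [Fintype ι] {Ω : Set (ι → ℝ)}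
    {θ : (ι → ℝ) → ℝ} {F : (ι → ℝ) → ι → ℝ} (hF : ∀ u v, 0 ≤ (u - v) ⬝ᵥ (F u - F v))
    {x y g h : ι → ℝ} (hxΩ : x ∈ Ω) (hyΩ : y ∈ Ω)
    (hx : ∀ u ∈ Ω, θ u - θ x + (u - x) ⬝ᵥ (F x + g) ≥ 0)
    (hy : ∀ u ∈ Ω, θ u - θ y + (u - y) ⬝ᵥ (F y + h) ≥ 0) :
    0 ≤ (x - y) ⬝ᵥ (h - g) := by
  have hxy := hx y hyΩ
  have hyx := hy x hxΩ
  have hmono := hF x y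
  rw [← neg_sub x y] at hxy
  simp only [neg_dotProduct, dotProduct_add, dotProduct_sub] at hxy hyx hmono ⊢
  linarith

theorem sum_range_le_of_add_le {a d : ℕ → ℝ} (hstep : ∀ k, a (k + 1) + d k ≤ a k)
    (ha : ∀ k, 0 ≤ a k) (m : ℕ) : ∑ k ∈ Finset.range m, d k ≤ a 0 :=
  calc ∑ k ∈ Finset.range m, d k ≤ ∑ k ∈ Finset.range m, (a k - a (k + 1)) :=
        Finset.sum_le_sum fun k _ => by linarith [hstep k]
    _ = a 0 - a m := Finset.sum_range_sub' a m
    _ ≤ a 0 := by linarith [ha m]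

theorem Antitone.le_div_of_sum_range_le {d : ℕ → ℝ} (hd : Antitone d) {C : ℝ}
    (hsum : ∀ m, ∑ k ∈ Finset.range m, d k ≤ C) {k : ℕ} (hk : 1 ≤ k) : d (k - 1) ≤ C / k := by
  have hlow : k • d (k - 1) ≤ ∑ j ∈ Finset.range k, d j := by
    simpa using Finset.card_nsmul_le_sum (Finset.range k) d (d (k - 1))
      fun j hj => hd (Nat.le_sub_one_of_lt (Finset.mem_range.mp hj))
  rw [le_div_iff₀ (by exact_mod_cast hk), mul_comm, ← nsmul_eq_mul]
  exact hlow.trans (hsum k)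

section ProximalStep

variable {ι : Type*} [Fintype ι] {Ω : Set (ι → ℝ)} {θ : (ι → ℝ) → ℝ} {F : (ι → ℝ) → ι → ℝ}
  {G : Matrix ι ι ℝ}

theorem proximal_step_fejer (hF : ∀ u v, 0 ≤ (u - v) ⬝ᵥ (F u - F v)) (hG : G.PosSemidef)
    {x₀ x₁ wstar : ι → ℝ} (hx₁Ω : x₁ ∈ Ω) (hstarΩ : wstar ∈ Ω)
    (hx₁ : ∀ u ∈ Ω, θ u - θ x₁ + (u - x₁) ⬝ᵥ (F x₁ + G *ᵥ (x₁ - x₀)) ≥ 0)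
    (hstar : ∀ u ∈ Ω, θ u - θ wstar + (u - wstar) ⬝ᵥ F wstar ≥ 0) :
    (x₁ - wstar) ⬝ᵥ G *ᵥ (x₁ - wstar) ≤
      (x₀ - wstar) ⬝ᵥ G *ᵥ (x₀ - wstar) - (x₀ - x₁) ⬝ᵥ G *ᵥ (x₀ - x₁) := by
  have hcross : 0 ≤ (x₁ - wstar) ⬝ᵥ G *ᵥ (x₀ - x₁) := by
    have := sub_dotProduct_sub_nonneg_of_variational hF hx₁Ω hstarΩ hx₁ (h := 0)
      (by simpa using hstar)
    rwa [zero_sub, ← Matrix.mulVec_neg, neg_sub] at this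
  have := hG.add_dotProduct_mulVec_add_ge hcross
  rw [sub_add_sub_cancel'] at this
  linarith

theorem proximal_step_diff_le (hF : ∀ u v, 0 ≤ (u - v) ⬝ᵥ (F u - F v)) (hG : G.PosSemidef)
    {x₀ x₁ x₂ : ι → ℝ} (hx₁Ω : x₁ ∈ Ω) (hx₂Ω : x₂ ∈ Ω)
    (hx₁ : ∀ u ∈ Ω, θ u - θ x₁ + (u - x₁) ⬝ᵥ (F x₁ + G *ᵥ (x₁ - x₀)) ≥ 0)
    (hx₂ : ∀ u ∈ Ω, θ u - θ x₂ + (u - x₂) ⬝ᵥ (F x₂ + G *ᵥ (x₂ - x₁)) ≥ 0) :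
    (x₂ - x₁) ⬝ᵥ G *ᵥ (x₂ - x₁) ≤ (x₁ - x₀) ⬝ᵥ G *ᵥ (x₁ - x₀) := by
  have hcross : 0 ≤ (x₂ - x₁) ⬝ᵥ G *ᵥ ((x₁ - x₀) - (x₂ - x₁)) := by
    rw [Matrix.mulVec_sub]
    exact sub_dotProduct_sub_nonneg_of_variational hF hx₂Ω hx₁Ω hx₂ hx₁
  have := hG.add_dotProduct_mulVec_add_ge hcross
  rw [add_sub_cancel] at this
  linarith [hG.dotProduct_mulVec_self_nonneg ((x₁ - x₀) - (x₂ - x₁))]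

end ProximalStep

theorem stmt14_general {n : ℕ} (Ω : Set (Fin n → ℝ))
    (θ : (Fin n → ℝ) → ℝ)
    (F : (Fin n → ℝ) → (Fin n → ℝ)) (hFmono : ∀ u v, 0 ≤ (u - v) ⬝ᵥ (F u - F v))
    (G : Matrix (Fin n) (Fin n) ℝ) (hG : G.PosSemidef)
    (w : ℕ → (Fin n → ℝ)) (hwΩ : ∀ k, w k ∈ Ω)
    (hiter : ∀ k, ∀ u ∈ Ω, θ u - θ (w (k + 1)) +
      (u - w (k + 1)) ⬝ᵥ (F (w (k + 1)) + G.mulVec (w (k + 1) - w k)) ≥ 0)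
    (wstar : Fin n → ℝ) (hstarΩ : wstar ∈ Ω)
    (hstar : ∀ u ∈ Ω, θ u - θ wstar + (u - wstar) ⬝ᵥ F wstar ≥ 0) :
    (∀ k, (w (k + 1) - wstar) ⬝ᵥ G.mulVec (w (k + 1) - wstar) ≤
        (w k - wstar) ⬝ᵥ G.mulVec (w k - wstar)
          - (w k - w (k + 1)) ⬝ᵥ G.mulVec (w k - w (k + 1))) ∧
    (∀ m : ℕ, ∑ k ∈ Finset.range m, (w (k + 1) - w k) ⬝ᵥ G.mulVec (w (k + 1) - w k) ≤
        (w 0 - wstar) ⬝ᵥ G.mulVec (w 0 - wstar)) ∧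
    (∀ k, 1 ≤ k → (w k - w (k - 1)) ⬝ᵥ G.mulVec (w k - w (k - 1)) ≤
        ((w 0 - wstar) ⬝ᵥ G.mulVec (w 0 - wstar)) / k) := by
  have fejer : ∀ k, (w (k + 1) - wstar) ⬝ᵥ G *ᵥ (w (k + 1) - wstar) ≤
      (w k - wstar) ⬝ᵥ G *ᵥ (w k - wstar) - (w k - w (k + 1)) ⬝ᵥ G *ᵥ (w k - w (k + 1)) :=
    fun k => proximal_step_fejer hFmono hG (hwΩ (k + 1)) hstarΩ (hiter k) hstar
  have summable : ∀ m, ∑ k ∈ Finset.range m, (w (k + 1) - w k) ⬝ᵥ G *ᵥ (w (k + 1) - w k) ≤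
      (w 0 - wstar) ⬝ᵥ G *ᵥ (w 0 - wstar) := by
    refine sum_range_le_of_add_le (a := fun k => (w k - wstar) ⬝ᵥ G *ᵥ (w k - wstar))
      (fun k => ?_) fun k => hG.dotProduct_mulVec_self_nonneg _
    linarith [fejer k, Matrix.sub_dotProduct_mulVec_sub_comm G (w (k + 1)) (w k)]
  have antitone : Antitone fun k => (w (k + 1) - w k) ⬝ᵥ G *ᵥ (w (k + 1) - w k) :=
    antitone_nat_of_succ_le fun k =>
      proximal_step_diff_le hFmono hG (hwΩ (k + 1)) (hwΩ (k + 2)) (hiter k) (hiter (k + 1))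
  refine ⟨fejer, summable, fun k hk => ?_⟩
  simpa only [Nat.sub_add_cancel hk] using antitone.le_div_of_sum_range_le summable hk

/-- Fejér-type contraction of the proximal point method in the G-seminorm, summability of
the successive differences, and the O(1/k) nonergodic rate. -/
theorem stmt14 {n : ℕ} (Ω : Set (Fin n → ℝ)) (hΩconv : Convex ℝ Ω)
    (θ : (Fin n → ℝ) → ℝ) (hθconv : ConvexOn ℝ Set.univ θ)
    (F : (Fin n → ℝ) → (Fin n → ℝ)) (hFmono : ∀ u v, 0 ≤ (u - v) ⬝ᵥ (F u - F v))
    (G : Matrix (Fin n) (Fin n) ℝ) (hG : G.PosSemidef)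
    (w : ℕ → (Fin n → ℝ)) (hwΩ : ∀ k, w k ∈ Ω)
    (hiter : ∀ k, ∀ u ∈ Ω, θ u - θ (w (k + 1)) +
      (u - w (k + 1)) ⬝ᵥ (F (w (k + 1)) + G.mulVec (w (k + 1) - w k)) ≥ 0)
    (wstar : Fin n → ℝ) (hstarΩ : wstar ∈ Ω)
    (hstar : ∀ u ∈ Ω, θ u - θ wstar + (u - wstar) ⬝ᵥ F wstar ≥ 0) :
    (∀ k, (w (k + 1) - wstar) ⬝ᵥ G.mulVec (w (k + 1) - wstar) ≤
        (w k - wstar) ⬝ᵥ G.mulVec (w k - wstar)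
          - (w k - w (k + 1)) ⬝ᵥ G.mulVec (w k - w (k + 1))) ∧
    (∀ m : ℕ, ∑ k ∈ Finset.range m, (w (k + 1) - w k) ⬝ᵥ G.mulVec (w (k + 1) - w k) ≤
        (w 0 - wstar) ⬝ᵥ G.mulVec (w 0 - wstar)) ∧
    (∀ k, 1 ≤ k → (w k - w (k - 1)) ⬝ᵥ G.mulVec (w k - w (k - 1)) ≤
        ((w 0 - wstar) ⬝ᵥ G.mulVec (w 0 - wstar)) / k) :=
  stmt14_general Ω θ F hFmono G hG w hwΩ hiter wstar hstarΩ hstar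
end
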